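/- Let G = (V, E; w) be a graph with strictly positive edge weights. If the matching game Γ_G admits a PMAS, then G contains no induced butterfly: there do not exist distinct vertices 1, 2, 3, 4, 5 whose induced subgraph has edge set exactly {12, 13, 23, 34, 35, 45} (two triangles sharing the single vertex 3). -/

import Mathlib

open Finset

/-- `M` is a matching of the induced subgraph `G[S]`, given as a finite set of
(ordered representatives of) edges with endpoints in `S`, pairwise vertex-disjoint. -/
def IsMatchingIn {V : Type*} (G : SimpleGraph V) (S : Finset V)
    (M : Finset (V × V)) : Prop :=
  (∀ p ∈ M, G.Adj p.1 p.2 ∧ p.1 ∈ S ∧ p.2 ∈ S) ∧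
  (∀ p ∈ M, ∀ q ∈ M, p ≠ q →
    p.1 ≠ q.1 ∧ p.1 ≠ q.2 ∧ p.2 ≠ q.1 ∧ p.2 ≠ q.2)

/-- `r` is the maximum total weight of a matching in the induced subgraph `G[S]`. -/
def IsMaxMatchingWeight {V : Type*} (G : SimpleGraph V)
    (w : V → V → ℝ) (S : Finset V) (r : ℝ) : Prop :=
  (∃ M : Finset (V × V), IsMatchingIn G S M ∧ ∑ p ∈ M, w p.1 p.2 = r) ∧
  (∀ M : Finset (V × V), IsMatchingIn G S M → ∑ p ∈ M, w p.1 p.2 ≤ r)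

/-- A population monotonic allocation scheme (PMAS): `x S i` is the payoff of player `i`
in coalition `S`.  Efficiency holds for every nonempty coalition, and every player's
payoff is monotone under coalition inclusion. -/
def IsPMAS {N : Type*} [DecidableEq N] (γ : Finset N → ℝ)
    (x : Finset N → N → ℝ) : Prop :=
  (∀ S : Finset N, S.Nonempty → ∑ i ∈ S, x S i = γ S) ∧
  (∀ S T : Finset N, S ⊆ T → ∀ i ∈ S, x S i ≤ x T i)

/-!
Call the edge `ca` saturated at `c` when the PMAS pays `c` at least `w c a` in the coalition
`{c, a}`. On an induced path `a - c - d` one of the two edges is saturated at `c`: otherwise, by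
monotonicity, the payoffs in `{c, a, d}` add up to more than `max (w c a) (w c d)`, which is all a
one-edge matching can earn there. In a triangle `{c, a, b}` the edges `ca` and `cb` are not both
saturated at `c`, since `c` would then take the heavier of them while `a` and `b` still share
`w a b > 0`. In a butterfly the four induced paths through the centre force two saturated edges
in one of the triangles.
-/

section

variable {V : Type*} {G : SimpleGraph V} {w : V → V → ℝ}

lemma IsMatchingIn.singleton {S : Finset V} {a b : V} (hab : G.Adj a b) (ha : a ∈ S)
    (hb : b ∈ S) : IsMatchingIn G S {(a, b)} := by
  refine ⟨fun p hp => ?_, fun p hp q hq hpq => ?_⟩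
  · rw [mem_singleton.1 hp]
    exact ⟨hab, ha, hb⟩
  · exact absurd ((mem_singleton.1 hp).trans (mem_singleton.1 hq).symm) hpq

lemma IsMatchingIn.two_mul_card_le [DecidableEq V] {S : Finset V} {M : Finset (V × V)}
    (hM : IsMatchingIn G S M) : 2 * #M ≤ #S := by
  calc 2 * #M = ∑ p ∈ M, #({p.1, p.2} : Finset V) := by
        rw [sum_congr rfl fun p hp => card_pair (hM.1 p hp).1.ne, sum_const, smul_eq_mul,
          mul_comm]
    _ = #(M.biUnion fun p => {p.1, p.2}) := by
        refine (card_biUnion fun p hp q hq hpq => ?_).symm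
        obtain ⟨h11, h12, h21, h22⟩ := hM.2 p hp q hq hpq
        simp [Function.onFun, h11.symm, h12.symm, h21.symm, h22.symm]
    _ ≤ #S := card_le_card <| biUnion_subset.2 fun p hp => by
        simp [insert_subset_iff, (hM.1 p hp).2]

lemma weight_le_of_mem_triple [DecidableEq V] (hsym : ∀ a b, w a b = w b a) {a b c u v : V}
    {m : ℝ} (hab : G.Adj a b → w a b ≤ m) (hac : G.Adj a c → w a c ≤ m)
    (hbc : G.Adj b c → w b c ≤ m) (hu : u ∈ ({a, b, c} : Finset V))
    (hv : v ∈ ({a, b, c} : Finset V)) (huv : G.Adj u v) : w u v ≤ m := by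
  simp only [mem_insert, mem_singleton] at hu hv
  rcases hu with rfl | rfl | rfl <;> rcases hv with rfl | rfl | rfl <;>
    first
      | exact absurd huv G.irrefl
      | exact hab huv | exact hac huv | exact hbc huv
      | (rw [hsym]; first | exact hab huv.symm | exact hac huv.symm | exact hbc huv.symm)

namespace IsMaxMatchingWeight

variable {S : Finset V} {r : ℝ}

lemma weight_le (h : IsMaxMatchingWeight G w S r) {a b : V} (hab : G.Adj a b) (ha : a ∈ S)
    (hb : b ∈ S) : w a b ≤ r := by
  simpa using h.2 _ (IsMatchingIn.singleton hab ha hb)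

lemma le_of_card_le_three [DecidableEq V] (h : IsMaxMatchingWeight G w S r) {m : ℝ}
    (hm : 0 ≤ m) (hS : #S ≤ 3) (hE : ∀ a b, G.Adj a b → a ∈ S → b ∈ S → w a b ≤ m) :
    r ≤ m := by
  obtain ⟨M, hM, rfl⟩ := h.1
  have hM1 : #M ≤ 1 := by have := hM.two_mul_card_le; omega
  calc ∑ p ∈ M, w p.1 p.2 ≤ #M • m := sum_le_card_nsmul _ _ _ fun p hp =>
        let ⟨hadj, h1, h2⟩ := hM.1 p hp; hE _ _ hadj h1 h2
    _ ≤ 1 • m := nsmul_le_nsmul_left hm hM1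
    _ = m := one_nsmul m

lemma le_of_triple [DecidableEq V] (hsym : ∀ a b, w a b = w b a) {a b c : V} {m : ℝ}
    (h : IsMaxMatchingWeight G w {a, b, c} r) (hm : 0 ≤ m)
    (hab : G.Adj a b → w a b ≤ m) (hac : G.Adj a c → w a c ≤ m)
    (hbc : G.Adj b c → w b c ≤ m) : r ≤ m :=
  h.le_of_card_le_three hm card_le_three fun _ _ huv hu hv =>
    weight_le_of_mem_triple hsym hab hac hbc hu hv huv

end IsMaxMatchingWeight

namespace IsPMAS

variable [DecidableEq V] {γ : Finset V → ℝ} {x : Finset V → V → ℝ}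

lemma sum_pair (hx : IsPMAS γ x) {a b : V} (hab : a ≠ b) :
    x {a, b} a + x {a, b} b = γ {a, b} := by
  rw [← Finset.sum_pair hab]
  exact hx.1 _ (insert_nonempty _ _)

lemma sum_triple (hx : IsPMAS γ x) {a b c : V} (hab : a ≠ b) (hac : a ≠ c) (hbc : b ≠ c) :
    x {a, b, c} a + x {a, b, c} b + x {a, b, c} c = γ {a, b, c} := by
  rw [← hx.1 _ (insert_nonempty _ _), sum_insert (by simp [hab, hac]), Finset.sum_pair hbc,
    add_assoc]

lemma weight_le_add (hx : IsPMAS γ x) (hγ : ∀ S, IsMaxMatchingWeight G w S (γ S)) {a b : V}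
    (hab : G.Adj a b) : w a b ≤ x {a, b} a + x {a, b} b :=
  hx.sum_pair hab.ne ▸ (hγ _).weight_le hab (by simp) (by simp)

lemma weight_le_or_weight_le_of_induced_path (hx : IsPMAS γ x)
    (hsym : ∀ a b, w a b = w b a) (hpos : ∀ a b, G.Adj a b → 0 < w a b)
    (hγ : ∀ S, IsMaxMatchingWeight G w S (γ S)) {c a d : V} (hca : G.Adj c a) (hcd : G.Adj c d)
    (had : ¬ G.Adj a d) (had' : a ≠ d) :
    w c a ≤ x {c, a} c ∨ w c d ≤ x {c, d} c := by
  have hP := hx.sum_triple hca.ne hcd.ne had'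
  have hγP : γ {c, a, d} ≤ max (w c a) (w c d) :=
    (hγ _).le_of_triple hsym ((hpos _ _ hca).le.trans (le_max_left _ _))
      (fun _ => le_max_left _ _) (fun _ => le_max_right _ _) (fun h => absurd h had)
  have hca' := hx.weight_le_add hγ hca
  have hcd' := hx.weight_le_add hγ hcd
  have hPc₁ := hx.2 {c, a} {c, a, d} (by grind) c (by simp)
  have hPc₂ := hx.2 {c, d} {c, a, d} (by grind) c (by simp)
  have hPa := hx.2 {c, a} {c, a, d} (by grind) a (by simp)
  have hPd := hx.2 {c, d} {c, a, d} (by grind) d (by simp)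
  rcases le_total (w c a) (w c d) with h | h
  · left
    linarith [max_eq_right h]
  · right
    linarith [max_eq_left h]

lemma not_weight_le_and_weight_le_of_triangle (hx : IsPMAS γ x)
    (hsym : ∀ a b, w a b = w b a) (hpos : ∀ a b, G.Adj a b → 0 < w a b)
    (hγ : ∀ S, IsMaxMatchingWeight G w S (γ S)) {c a b : V} (hca : G.Adj c a) (hcb : G.Adj c b)
    (hab : G.Adj a b) :
    ¬ (w c a ≤ x {c, a} c ∧ w c b ≤ x {c, b} c) := by
  rintro ⟨hsa, hsb⟩
  have hT := hx.sum_triple hca.ne hcb.ne hab.ne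
  have hγT : γ {c, a, b} ≤ max (max (w c a) (w c b)) (w a b) :=
    (hγ _).le_of_triple hsym ((hpos _ _ hab).le.trans (le_max_right _ _))
      (fun _ => (le_max_left _ _).trans (le_max_left _ _))
      (fun _ => (le_max_right _ _).trans (le_max_left _ _)) (fun _ => le_max_right _ _)
  have hab' := hx.weight_le_add hγ hab
  have hTc₁ := hx.2 {c, a} {c, a, b} (by grind) c (by simp)
  have hTc₂ := hx.2 {c, b} {c, a, b} (by grind) c (by simp)
  have hTa := hx.2 {a, b} {c, a, b} (by grind) a (by simp)
  have hTb := hx.2 {a, b} {c, a, b} (by grind) b (by simp)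
  have hca_pos := hpos _ _ hca
  have hab_pos := hpos _ _ hab
  exact absurd hγT (not_le.2 (max_lt (max_lt (by linarith) (by linarith)) (by linarith)))

end IsPMAS

end

theorem matchingGame_butterfly_free_general {V : Type*} [DecidableEq V]
    (G : SimpleGraph V) (w : V → V → ℝ)
    (hsym : ∀ a b : V, w a b = w b a)
    (hpos : ∀ a b : V, G.Adj a b → 0 < w a b)
    (γ : Finset V → ℝ)
    (hγ : ∀ S : Finset V, IsMaxMatchingWeight G w S (γ S))
    (hpmas : ∃ x : Finset V → V → ℝ, IsPMAS γ x) :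
    ¬ ∃ v1 v2 v3 v4 v5 : V,
      v1 ≠ v2 ∧ v1 ≠ v3 ∧ v1 ≠ v4 ∧ v1 ≠ v5 ∧ v2 ≠ v3 ∧ v2 ≠ v4 ∧ v2 ≠ v5 ∧
      v3 ≠ v4 ∧ v3 ≠ v5 ∧ v4 ≠ v5 ∧
      G.Adj v1 v2 ∧ G.Adj v1 v3 ∧ G.Adj v2 v3 ∧ G.Adj v3 v4 ∧ G.Adj v3 v5 ∧ G.Adj v4 v5 ∧
      ¬ G.Adj v1 v4 ∧ ¬ G.Adj v1 v5 ∧ ¬ G.Adj v2 v4 ∧ ¬ G.Adj v2 v5 := by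
  obtain ⟨x, hx⟩ := hpmas
  rintro ⟨v1, v2, v3, v4, v5, -, -, h14, h15, -, h24, h25, -, -, -,
    a12, a13, a23, a34, a35, a45, n14, n15, n24, n25⟩
  have path := fun {a d : V} (hca : G.Adj v3 a) (hcd : G.Adj v3 d) (had : ¬ G.Adj a d) =>
    hx.weight_le_or_weight_le_of_induced_path hsym hpos hγ hca hcd had
  have p14 := path a13.symm a34 n14 h14
  have p15 := path a13.symm a35 n15 h15
  have p24 := path a23.symm a34 n24 h24
  have p25 := path a23.symm a35 n25 h25
  have t12 := hx.not_weight_le_and_weight_le_of_triangle hsym hpos hγ a13.symm a23.symm a12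
  have t45 := hx.not_weight_le_and_weight_le_of_triangle hsym hpos hγ a34 a35 a45
  tauto

/-- Butterfly-freeness (Lemma 3.10). -/
theorem matchingGame_butterfly_free {V : Type*} [Fintype V] [DecidableEq V]
    (G : SimpleGraph V) (w : V → V → ℝ)
    (hsym : ∀ a b : V, w a b = w b a)
    (hpos : ∀ a b : V, G.Adj a b → 0 < w a b)
    (γ : Finset V → ℝ)
    (hγ : ∀ S : Finset V, IsMaxMatchingWeight G w S (γ S))
    (hpmas : ∃ x : Finset V → V → ℝ, IsPMAS γ x) :
    ¬ ∃ v1 v2 v3 v4 v5 : V,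
      v1 ≠ v2 ∧ v1 ≠ v3 ∧ v1 ≠ v4 ∧ v1 ≠ v5 ∧ v2 ≠ v3 ∧ v2 ≠ v4 ∧ v2 ≠ v5 ∧
      v3 ≠ v4 ∧ v3 ≠ v5 ∧ v4 ≠ v5 ∧
      G.Adj v1 v2 ∧ G.Adj v1 v3 ∧ G.Adj v2 v3 ∧ G.Adj v3 v4 ∧ G.Adj v3 v5 ∧ G.Adj v4 v5 ∧
      ¬ G.Adj v1 v4 ∧ ¬ G.Adj v1 v5 ∧ ¬ G.Adj v2 v4 ∧ ¬ G.Adj v2 v5 :=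
  matchingGame_butterfly_free_general G w hsym hpos γ hγ hpmas
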